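/- Let r ≤ t be natural numbers, α₁,…,α_r ≥ 0 with Σ_{k=1}^r α_k = 1, and let ξ¹,…,ξᵗ ∈ ℝ^k be vectors with nonnegative entries. Define z_k := (ξᵏ; w − Fᵀξᵏ; 1) ∈ ℝ^{n+1} for 1 ≤ k ≤ r and z_k := (ξᵏ; −Fᵀξᵏ; 0) ∈ ℝ^{n+1} for r < k ≤ t, and set X := Σ_{k=1}^r α_k z_k z_kᵀ + Σ_{k=r+1}^t z_k z_kᵀ. If every entry of X is nonnegative, then the pair (Y, y) with Y := Σ_{k=1}^r α_k ξᵏ(ξᵏ)ᵀ + Σ_{k=r+1}^t ξᵏ(ξᵏ)ᵀ and y := Σ_{k=1}^r α_k ξᵏ is Shor-feasible for the data (F, w), and ⟨Ĥ, X⟩ = ⟨Q, Y⟩ + 2 dᵀ y + v. (This is the converse direction of the equivalence between the doubly nonnegative relaxation and the Shor relaxation, applied to the completely positive decomposition of a feasible X.) -/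

import Mathlib

open Matrix

noncomputable section

/-- Frobenius (trace) inner product of real matrices. -/
def frob {ι : Type} [Fintype ι] (A B : Matrix ι ι ℝ) : ℝ := (Aᵀ * B).trace

/-- `(Y, y)` is Shor-feasible for the data `(F, w)`. -/
def ShorFeasible {k : ℕ} {ι : Type} [Fintype ι]
    (F : Matrix (Fin k) ι ℝ) (w : ι → ℝ)
    (Y : Matrix (Fin k) (Fin k) ℝ) (y : Fin k → ℝ) : Prop :=
  (∀ i, Fᵀ.mulVec y i ≤ w i) ∧
  (∀ i, 0 ≤ y i) ∧
  (∀ i j, 0 ≤ (Fᵀ * Y * F - vecMulVec w (Fᵀ.mulVec y) - vecMulVec (Fᵀ.mulVec y) w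
      + vecMulVec w w) i j) ∧
  (∀ i j, 0 ≤ Y i j) ∧
  (∀ i j, 0 ≤ (vecMulVec w y - Fᵀ * Y) i j) ∧
  (fromBlocks Y (Matrix.of fun i (_ : Unit) => y i)
    (Matrix.of fun (_ : Unit) j => y j) 1).PosSemidef

/-- The objective matrix `Ĥ` of the DNN relaxation. -/
def Hhat {k m : ℕ} (Q : Matrix (Fin k) (Fin k) ℝ) (d : Fin k → ℝ) (v : ℝ) :
    Matrix ((Fin k ⊕ Fin m) ⊕ Unit) ((Fin k ⊕ Fin m) ⊕ Unit) ℝ :=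
  fromBlocks (fromBlocks Q 0 0 0)
    (Matrix.of fun i _ => Sum.elim d (fun _ => (0 : ℝ)) i)
    (Matrix.of fun _ j => Sum.elim d (fun _ => (0 : ℝ)) j)
    (Matrix.of fun _ _ => v)

/-- The vectors `z_K := (ξᵏ; w − Fᵀξᵏ; 1)` for `K < r`, and `(ξᵏ; −Fᵀξᵏ; 0)` otherwise. -/
def zvec {k m : ℕ} (F : Matrix (Fin k) (Fin m) ℝ) (w : Fin m → ℝ) (r : ℕ)
    (ξ : ℕ → Fin k → ℝ) (K : ℕ) : (Fin k ⊕ Fin m) ⊕ Unit → ℝ :=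
  if K < r then
    Sum.elim (Sum.elim (ξ K) (fun b => w b - Fᵀ.mulVec (ξ K) b)) (fun _ => (1 : ℝ))
  else
    Sum.elim (Sum.elim (ξ K) (fun b => - Fᵀ.mulVec (ξ K) b)) (fun _ => (0 : ℝ))

/-- `X := Σ_{K<r} α_K z_K z_Kᵀ + Σ_{r≤K<t} z_K z_Kᵀ`. -/
def bigX {k m : ℕ} (F : Matrix (Fin k) (Fin m) ℝ) (w : Fin m → ℝ) (r t : ℕ)
    (α : ℕ → ℝ) (ξ : ℕ → Fin k → ℝ) :
    Matrix ((Fin k ⊕ Fin m) ⊕ Unit) ((Fin k ⊕ Fin m) ⊕ Unit) ℝ :=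
  ∑ K ∈ Finset.range r, α K • vecMulVec (zvec F w r ξ K) (zvec F w r ξ K)
    + ∑ K ∈ Finset.Ico r t, vecMulVec (zvec F w r ξ K) (zvec F w r ξ K)

/-- `Y := Σ_{K<r} α_K ξᵏ(ξᵏ)ᵀ + Σ_{r≤K<t} ξᵏ(ξᵏ)ᵀ`. -/
def Ymat {k : ℕ} (r t : ℕ) (α : ℕ → ℝ) (ξ : ℕ → Fin k → ℝ) :
    Matrix (Fin k) (Fin k) ℝ :=
  ∑ K ∈ Finset.range r, α K • vecMulVec (ξ K) (ξ K)
    + ∑ K ∈ Finset.Ico r t, vecMulVec (ξ K) (ξ K)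

/-- `y := Σ_{K<r} α_K ξᵏ`. -/
def yvec {k : ℕ} (r : ℕ) (α : ℕ → ℝ) (ξ : ℕ → Fin k → ℝ) : Fin k → ℝ :=
  ∑ K ∈ Finset.range r, α K • ξ K

/-!
The vector `z_K` is the image of the lifted point `(ξᴷ, [K < r])` under the linear map
`L : (x, s) ↦ (x, s w - Fᵀ x, s)`, so `X = L M Lᵀ`, where `M` is the same weighted Gram matrix
built from the lifted points. Because `∑ α_K = 1`, `M` is exactly the Shor matrix
`[[Y, y], [yᵀ, 1]]`, hence positive semidefinite. Writing out the blocks of `L M Lᵀ` shows that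
every nonnegativity constraint of the Shor relaxation is an entry of `X`, and that `⟨Ĥ, X⟩` only
sees the blocks `Y`, `y` and `1`.
-/

open Finset

section WeightedGram

variable {n : Type*} (r t : ℕ) (α : ℕ → ℝ) (u : ℕ → n → ℝ)

def weightedGram : Matrix n n ℝ :=
  ∑ K ∈ range r, α K • vecMulVec (u K) (u K) + ∑ K ∈ Ico r t, vecMulVec (u K) (u K)

lemma weightedGram_apply (i j : n) :
    weightedGram r t α u i j
      = ∑ K ∈ range r, α K * (u K i * u K j) + ∑ K ∈ Ico r t, u K i * u K j := by
  simp [weightedGram, Matrix.sum_apply, vecMulVec_apply]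

lemma posSemidef_weightedGram [Fintype n] (hα : ∀ K < r, 0 ≤ α K) :
    (weightedGram r t α u).PosSemidef := by
  have hvv : ∀ K, (vecMulVec (u K) (u K)).PosSemidef := fun K => by
    simpa using posSemidef_vecMulVec_self_star (u K)
  exact (posSemidef_sum _ fun K hK => (hvv K).smul (hα K (mem_range.1 hK))).add
    (posSemidef_sum _ fun K _ => hvv K)

lemma weightedGram_mulVec {m : Type*} [Fintype n] (A : Matrix m n ℝ) :
    weightedGram r t α (fun K => A *ᵥ u K) = A * weightedGram r t α u * Aᵀ := by
  simp only [weightedGram, Matrix.mul_add, Matrix.add_mul, Matrix.mul_sum, Matrix.sum_mul,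
    Matrix.mul_smul, Matrix.smul_mul, mul_vecMulVec, vecMulVec_mul, vecMul_transpose]

end WeightedGram

section ShorLift

variable {κ ι : Type}

def shorMatrix (Y : Matrix κ κ ℝ) (y : κ → ℝ) : Matrix (κ ⊕ Unit) (κ ⊕ Unit) ℝ :=
  fromBlocks Y (Matrix.of fun i (_ : Unit) => y i) (Matrix.of fun (_ : Unit) j => y j) 1

def liftMatrix [DecidableEq κ] (F : Matrix κ ι ℝ) (w : ι → ℝ) :
    Matrix ((κ ⊕ ι) ⊕ Unit) (κ ⊕ Unit) ℝ :=
  fromBlocks (fromRows 1 (-Fᵀ)) (fromRows 0 (replicateCol Unit w)) 0 1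

def shorLift (r : ℕ) (ξ : ℕ → κ → ℝ) (K : ℕ) : κ ⊕ Unit → ℝ :=
  Sum.elim (ξ K) fun _ => if K < r then 1 else 0

lemma liftMatrix_mul_shorMatrix_mul_transpose [Fintype κ] [DecidableEq κ] [Fintype ι]
    (F : Matrix κ ι ℝ) (w : ι → ℝ) (Y : Matrix κ κ ℝ) (y : κ → ℝ) :
    liftMatrix F w * shorMatrix Y y * (liftMatrix F w)ᵀ =
      fromBlocks
        (fromBlocks Y (vecMulVec y w - Y * F) (vecMulVec w y - Fᵀ * Y)
          (Fᵀ * Y * F - vecMulVec w (Fᵀ *ᵥ y) - vecMulVec (Fᵀ *ᵥ y) w + vecMulVec w w))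
        (fromRows (replicateCol Unit y) (replicateCol Unit (w - Fᵀ *ᵥ y)))
        (fromCols (replicateRow Unit y) (replicateRow Unit (w - Fᵀ *ᵥ y))) 1 := by
  ext (⟨i | a⟩ | _) (⟨j | b⟩ | _) <;>
  simp [liftMatrix, shorMatrix, mul_apply, Fintype.sum_sum_type, vecMulVec_apply, mulVec,
    dotProduct, one_apply, add_mul, sum_add_distrib, sum_mul, mul_sum] <;>
  ring_nf <;> simp only [mul_comm, mul_left_comm] <;> ring_nf

lemma weightedGram_shorLift [Fintype κ] (r t : ℕ) (α : ℕ → ℝ) (ξ : ℕ → κ → ℝ)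
    (hαsum : ∑ K ∈ range r, α K = 1) :
    weightedGram r t α (shorLift r ξ)
      = shorMatrix (weightedGram r t α ξ) (∑ K ∈ range r, α K • ξ K) := by
  have hIco : ∀ K ∈ Ico r t, ¬ K < r := fun K hK => not_lt.2 (mem_Ico.1 hK).1
  ext (i | _) (j | _) <;>
  simp [weightedGram_apply, shorMatrix, shorLift, Finset.sum_apply, hαsum, sum_ite_of_true,
    sum_ite_of_false hIco]

lemma posSemidef_shorMatrix_weightedGram [Fintype κ] (r t : ℕ) (α : ℕ → ℝ) (ξ : ℕ → κ → ℝ)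
    (hα : ∀ K < r, 0 ≤ α K) (hαsum : ∑ K ∈ range r, α K = 1) :
    (shorMatrix (weightedGram r t α ξ) (∑ K ∈ range r, α K • ξ K)).PosSemidef := by
  rw [← weightedGram_shorLift r t α ξ hαsum]
  exact posSemidef_weightedGram r t α _ hα

end ShorLift

section DNN

variable {k m : ℕ} (F : Matrix (Fin k) (Fin m) ℝ) (w : Fin m → ℝ)

lemma zvec_eq_liftMatrix_mulVec (r : ℕ) (ξ : ℕ → Fin k → ℝ) :
    zvec F w r ξ = fun K => liftMatrix F w *ᵥ shorLift r ξ K := by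
  ext K (⟨i | b⟩ | _) <;> by_cases hK : K < r <;>
  simp [zvec, liftMatrix, shorLift, hK, mulVec, dotProduct, Fintype.sum_sum_type, one_apply,
    sub_eq_neg_add]

lemma bigX_eq_liftMatrix_conj (r t : ℕ) (α : ℕ → ℝ) (hαsum : ∑ K ∈ range r, α K = 1)
    (ξ : ℕ → Fin k → ℝ) :
    bigX F w r t α ξ
      = liftMatrix F w * shorMatrix (Ymat r t α ξ) (yvec r α ξ) * (liftMatrix F w)ᵀ := by
  change weightedGram r t α (zvec F w r ξ) = _
  rw [zvec_eq_liftMatrix_mulVec, weightedGram_mulVec, weightedGram_shorLift r t α ξ hαsum]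
  rfl

lemma frob_Hhat_liftMatrix_conj (Q : Matrix (Fin k) (Fin k) ℝ) (d : Fin k → ℝ) (v : ℝ)
    (Y : Matrix (Fin k) (Fin k) ℝ) (y : Fin k → ℝ) :
    frob (Hhat Q d v) (liftMatrix F w * shorMatrix Y y * (liftMatrix F w)ᵀ)
      = frob Q Y + 2 * (d ⬝ᵥ y) + v := by
  rw [liftMatrix_mul_shorMatrix_mul_transpose]
  simp [frob, Hhat, trace, mul_apply, Fintype.sum_sum_type, dotProduct, sum_add_distrib]
  ring

end DNN

theorem dnn_decomposition_to_shor_feasible_general {k m : ℕ}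
    (F : Matrix (Fin k) (Fin m) ℝ) (w : Fin m → ℝ)
    (Q : Matrix (Fin k) (Fin k) ℝ) (d : Fin k → ℝ) (v : ℝ)
    (r t : ℕ)
    (α : ℕ → ℝ) (hα : ∀ K < r, 0 ≤ α K) (hαsum : ∑ K ∈ Finset.range r, α K = 1)
    (ξ : ℕ → Fin k → ℝ)
    (hXnn : ∀ i j, 0 ≤ bigX F w r t α ξ i j) :
    ShorFeasible F w (Ymat r t α ξ) (yvec r α ξ) ∧
    frob (Hhat (m := m) Q d v) (bigX F w r t α ξ)
      = frob Q (Ymat r t α ξ) + 2 * (d ⬝ᵥ yvec r α ξ) + v := by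
  have hX := bigX_eq_liftMatrix_conj F w r t α hαsum ξ
  have hXblocks := hX.trans (liftMatrix_mul_shorMatrix_mul_transpose F w _ _)
  refine ⟨⟨fun b => ?_, fun i => ?_, fun a b => ?_, fun i j => ?_, fun b i => ?_,
    posSemidef_shorMatrix_weightedGram r t α ξ hα hαsum⟩,
    hX ▸ frob_Hhat_liftMatrix_conj F w Q d v _ _⟩
  · simpa [hXblocks] using hXnn (.inl (.inr b)) (.inr ())
  · simpa [hXblocks] using hXnn (.inl (.inl i)) (.inr ())
  · simpa [hXblocks] using hXnn (.inl (.inr a)) (.inl (.inr b))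
  · simpa [hXblocks] using hXnn (.inl (.inl i)) (.inl (.inl j))
  · simpa [hXblocks] using hXnn (.inl (.inr b)) (.inl (.inl i))

/-- a completely positive decomposition of an entrywise nonnegative `X` yields a
Shor-feasible pair `(Y, y)` with the same objective value. -/
theorem dnn_decomposition_to_shor_feasible {k m : ℕ} (hk : 1 ≤ k) (hm : 1 ≤ m)
    (F : Matrix (Fin k) (Fin m) ℝ) (w : Fin m → ℝ)
    (Q : Matrix (Fin k) (Fin k) ℝ) (hQ : Q.IsSymm) (d : Fin k → ℝ) (v : ℝ)
    (r t : ℕ) (hrt : r ≤ t)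
    (α : ℕ → ℝ) (hα : ∀ K < r, 0 ≤ α K) (hαsum : ∑ K ∈ Finset.range r, α K = 1)
    (ξ : ℕ → Fin k → ℝ) (hξ : ∀ K < t, ∀ i, 0 ≤ ξ K i)
    (hXnn : ∀ i j, 0 ≤ bigX F w r t α ξ i j) :
    ShorFeasible F w (Ymat r t α ξ) (yvec r α ξ) ∧
    frob (Hhat (m := m) Q d v) (bigX F w r t α ξ)
      = frob Q (Ymat r t α ξ) + 2 * (d ⬝ᵥ yvec r α ξ) + v :=
  dnn_decomposition_to_shor_feasible_general F w Q d v r t α hα hαsum ξ hXnn
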